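/- arXiv:2209.08453 — 4 statements merged into one kernel-verified Lean document; each statement's English description precedes it below -/
import Mathlib

section
/- Let X = {x_1, ..., x_n} be a generic point cloud in ℝ^N whose points all lie in an affine subspace W of ℝ^N with dim W ≥ 1. Then there exists r_0 > 0 such that for every r with 0 < r < r_0 and for every orthogonal r-perturbation X_r^⊥ of X (with respect to W), there exists a projection r-perturbation X_r^Proj of X (with respect to W) such that d_J(X, X_r^⊥) ≤ d_J(X, X_r^Proj). -/
/-- The π-distortion between two indexed point clouds in `ℝ^N`. -/
noncomputable def pertDist {N n : ℕ} (x y : Fin n → EuclideanSpace ℝ (Fin N))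
    (π : Equiv.Perm (Fin n)) : ℝ :=
  (1 / 2) * ⨆ p : Fin n × Fin n,
    |dist (x p.1) (x p.2) - dist (y (π p.1)) (y (π p.2))|

/-- The discrete Gromov–Hausdorff distance between two indexed point clouds. -/
noncomputable def dJ {N n : ℕ} (x y : Fin n → EuclideanSpace ℝ (Fin N)) : ℝ :=
  ⨅ π : Equiv.Perm (Fin n), pertDist x y π

/-- A point cloud is generic if not all pairwise distances are equal. -/
def Generic {N n : ℕ} (x : Fin n → EuclideanSpace ℝ (Fin N)) : Prop :=
  ∃ i₁ i₂ i₃ i₄ : Fin n, i₁ ≠ i₂ ∧ i₃ ≠ i₄ ∧ dist (x i₁) (x i₂) ≠ dist (x i₃) (x i₄)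

private lemma abs_dist_sub_dist_le {α : Type*} [PseudoMetricSpace α]
    (a b a' b' : α) : |dist a b - dist a' b'| ≤ dist a a' + dist b b' := by
  have := dist_dist_dist_le a b a' b'
  rwa [Real.dist_eq] at this

theorem stmt_0 {N n : ℕ} (x : Fin n → EuclideanSpace ℝ (Fin N))
    (W : AffineSubspace ℝ (EuclideanSpace ℝ (Fin N)))
    (hdim : 1 ≤ Module.finrank ℝ W.direction)
    (hxW : ∀ i, x i ∈ W) (hgen : Generic x) :
    ∃ r₀ > 0, ∀ r : ℝ, 0 < r → r < r₀ →
      ∀ xperp : Fin n → EuclideanSpace ℝ (Fin N),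
        (∀ i, dist (x i) (xperp i) = r) →
        (∀ i, xperp i - x i ∈ W.directionᗮ) →
        ∃ z : Fin n → EuclideanSpace ℝ (Fin N),
          (∀ i, dist (x i) (z i) = r) ∧
          (∀ i, z i - x i ∈ W.direction) ∧
          dJ x xperp ≤ dJ x z := by
  classical
  obtain ⟨i₁, i₂, i₃, i₄, h12, h34, hne⟩ := hgen
  obtain ⟨a, b, hd⟩ : ∃ a b : Fin n, 0 < dist (x a) (x b) := by
    rcases hne.lt_or_gt with h | h
    · exact ⟨i₃, i₄, lt_of_le_of_lt dist_nonneg h⟩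
    · exact ⟨i₁, i₂, lt_of_le_of_lt dist_nonneg h⟩
  set d : ℝ := dist (x a) (x b) with hd_def
  have hab : a ≠ b := fun h => absurd hd (by simp [hd_def, h])
  -- the minimal gap δ between distinct pairwise distances
  set S : Finset ℝ :=
    (Finset.univ.filter (fun pq : (Fin n × Fin n) × (Fin n × Fin n) =>
      dist (x pq.1.1) (x pq.1.2) ≠ dist (x pq.2.1) (x pq.2.2))).image
      (fun pq => |dist (x pq.1.1) (x pq.1.2) - dist (x pq.2.1) (x pq.2.2)|) with hS
  have hSne : S.Nonempty :=
    ⟨|dist (x i₁) (x i₂) - dist (x i₃) (x i₄)|,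
      Finset.mem_image.2 ⟨((i₁, i₂), (i₃, i₄)),
        Finset.mem_filter.2 ⟨Finset.mem_univ _, hne⟩, rfl⟩⟩
  set δ : ℝ := S.min' hSne with hδ_def
  have hδpos : 0 < δ := by
    have hpos : ∀ y ∈ S, 0 < y := by
      intro y hy
      rw [hS] at hy
      simp only [Finset.mem_image, Finset.mem_filter] at hy
      obtain ⟨pq, ⟨-, hne'⟩, heq⟩ := hy
      rw [← heq]
      exact abs_pos.2 (sub_ne_zero.2 hne')
    exact hpos _ (S.min'_mem hSne)
  have hδle : ∀ p q : Fin n × Fin n, dist (x p.1) (x p.2) ≠ dist (x q.1) (x q.2) →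
      δ ≤ |dist (x p.1) (x p.2) - dist (x q.1) (x q.2)| := fun p q h =>
    S.min'_le _ (Finset.mem_image.2 ⟨(p, q),
      Finset.mem_filter.2 ⟨Finset.mem_univ _, h⟩, rfl⟩)
  refine ⟨min (δ / 4) (d / 2), by positivity, ?_⟩
  intro r hr hrlt xperp hxp _
  have hr4 : 4 * r < δ := by
    have := lt_of_lt_of_le hrlt (min_le_left _ _); linarith
  have hr2 : 2 * r < d := by
    have := lt_of_lt_of_le hrlt (min_le_right _ _); linarith
  -- the unit direction from b to a
  set u : EuclideanSpace ℝ (Fin N) := (d⁻¹) • (x a - x b) with hu_def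
  have hdne : d ≠ 0 := ne_of_gt hd
  have hxab : x a - x b = d • u := by
    rw [hu_def, smul_smul, mul_inv_cancel₀ hdne, one_smul]
  have hnormu : ‖u‖ = 1 := by
    rw [hu_def, norm_smul, ← dist_eq_norm, ← hd_def, Real.norm_eq_abs,
      abs_of_pos (inv_pos.2 hd), inv_mul_cancel₀ hdne]
  have huW : u ∈ W.direction := by
    refine Submodule.smul_mem _ _ ?_
    have := AffineSubspace.vsub_mem_direction (hxW a) (hxW b)
    rwa [vsub_eq_sub] at this
  set z : Fin n → EuclideanSpace ℝ (Fin N) :=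
    fun i => if i = a then x i - r • u else x i + r • u with hz
  have hzdist : ∀ i, dist (x i) (z i) = r := by
    intro i
    rw [hz]
    by_cases h : i = a <;>
      simp [h, dist_eq_norm, norm_smul, Real.norm_eq_abs, abs_of_pos hr, hnormu]
  have hzab : dist (z a) (z b) = d - 2 * r := by
    have hza : z a = x a - r • u := by simp [hz]
    have hzb : z b = x b + r • u := by simp [hz, hab.symm]
    have hsub : z a - z b = (d - 2 * r) • u := by
      rw [hza, hzb]
      have : x a = x b + d • u := by
        rw [← hxab]; abel
      rw [this]
      module
    rw [dist_eq_norm, hsub, norm_smul, Real.norm_eq_abs, hnormu, mul_one,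
      abs_of_nonneg (by linarith)]
  -- distance of z-perturbed pair images stays within 2r
  have hzmove : ∀ p : Fin n × Fin n,
      |dist (x p.1) (x p.2) - dist (z p.1) (z p.2)| ≤ 2 * r := by
    intro p
    have := abs_dist_sub_dist_le (x p.1) (x p.2) (z p.1) (z p.2)
    rw [hzdist p.1, hzdist p.2] at this
    linarith
  refine ⟨z, hzdist, ?_, ?_⟩
  · intro i
    by_cases h : i = a
    · have hzi : z i = x i - r • u := by simp [hz, h]
      rw [hzi, sub_sub_cancel_left]
      exact Submodule.neg_mem _ (Submodule.smul_mem _ r huW)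
    · have hzi : z i = x i + r • u := by simp [hz, h]
      rw [hzi, add_sub_cancel_left]
      exact Submodule.smul_mem _ r huW
  -- dJ x xperp ≤ r ≤ dJ x z
  have hupper : dJ x xperp ≤ r := by
    have h1 : dJ x xperp ≤ pertDist x xperp 1 :=
      ciInf_le ((Set.finite_range _).bddBelow) 1
    refine h1.trans ?_
    rw [pertDist]
    have hsup : (⨆ p : Fin n × Fin n,
        |dist (x p.1) (x p.2) - dist (xperp ((1 : Equiv.Perm (Fin n)) p.1))
          (xperp ((1 : Equiv.Perm (Fin n)) p.2))|) ≤ 2 * r := by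
      refine Real.iSup_le (fun p => ?_) (by linarith)
      simp only [Equiv.Perm.coe_one, id_eq]
      have := abs_dist_sub_dist_le (x p.1) (x p.2) (xperp p.1) (xperp p.2)
      rw [hxp p.1, hxp p.2] at this
      linarith
    linarith
  have hlower : r ≤ dJ x z := by
    rw [dJ]
    refine le_ciInf (fun π => ?_)
    rw [pertDist]
    set c₁ : Fin n := π.symm a
    set c₂ : Fin n := π.symm b
    have hterm : 2 * r ≤ |dist (x c₁) (x c₂) - dist (z (π c₁)) (z (π c₂))| := by
      have hπ1 : π c₁ = a := Equiv.apply_symm_apply π a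
      have hπ2 : π c₂ = b := Equiv.apply_symm_apply π b
      rw [hπ1, hπ2, hzab]
      by_cases h : dist (x c₁) (x c₂) = d
      · rw [h]
        rw [show d - (d - 2 * r) = 2 * r by ring, abs_of_nonneg (by linarith)]
      · have hgap : δ ≤ |dist (x c₁) (x c₂) - d| := hδle (c₁, c₂) (a, b) h
        rcases abs_cases (dist (x c₁) (x c₂) - d) with ⟨he, _⟩ | ⟨he, _⟩ <;>
          rcases abs_cases (dist (x c₁) (x c₂) - (d - 2 * r)) with ⟨hf, _⟩ | ⟨hf, _⟩ <;>
          linarith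
    have hle : |dist (x c₁) (x c₂) - dist (z (π c₁)) (z (π c₂))| ≤
        ⨆ p : Fin n × Fin n, |dist (x p.1) (x p.2) - dist (z (π p.1)) (z (π p.2))| :=
      le_ciSup (f := fun p : Fin n × Fin n =>
        |dist (x p.1) (x p.2) - dist (z (π p.1)) (z (π p.2))|)
        ((Set.finite_range _).bddAbove) (c₁, c₂)
    linarith
  linarith
end

section
/- Let X = {x_1, ..., x_n} be a generic point cloud in ℝ^N. Then there exists ε > 0 such that for every r with 0 < r < ε and every r-perturbation X_r = {x̃_1, ..., x̃_n} of X, the discrete Gromov–Hausdorff distance is attained by the identity matching: d_J(X, X_r) = (1/2) · max over pairs (i, j) of |dist(x_i, x_j) − dist(x̃_i, x̃_j)|. -/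
theorem stmt_1 {N n : ℕ} (x : Fin n → EuclideanSpace ℝ (Fin N))
    (hgen : Generic x) :
    ∃ ε > 0, ∀ r : ℝ, 0 < r → r < ε →
      ∀ xt : Fin n → EuclideanSpace ℝ (Fin N),
        (∀ i, dist (x i) (xt i) = r) →
        dJ x xt = (1 / 2) * ⨆ p : Fin n × Fin n,
          |dist (x p.1) (x p.2) - dist (xt p.1) (xt p.2)| := by
  classical
  obtain ⟨i₁, i₂, _, _, _, _, _⟩ := hgen
  have hn : Nonempty (Fin n) := ⟨i₁⟩
  have hnp : Nonempty (Fin n × Fin n) := ⟨(i₁, i₂)⟩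
  set P : Equiv.Perm (Fin n) → Prop :=
    fun π => ∃ p : Fin n × Fin n,
      dist (x (π p.1)) (x (π p.2)) ≠ dist (x p.1) (x p.2) with hP
  set δ : Equiv.Perm (Fin n) → ℝ := fun π =>
    if h : P π then
      |dist (x h.choose.1) (x h.choose.2) -
        dist (x (π h.choose.1)) (x (π h.choose.2))|
    else 1 with hδ
  have hδpos : ∀ π, 0 < δ π := by
    intro π
    by_cases h : P π
    · simp only [hδ, dif_pos h]
      rw [abs_pos, sub_ne_zero]
      exact fun hh => h.choose_spec hh.symm
    · simp [hδ, dif_neg h]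
  have huniv : (Finset.univ : Finset (Equiv.Perm (Fin n))).Nonempty := ⟨1, Finset.mem_univ 1⟩
  set m : ℝ := Finset.univ.inf' huniv δ with hm
  have hmpos : 0 < m := by
    rw [hm, Finset.lt_inf'_iff]
    exact fun π _ => hδpos π
  refine ⟨m / 4, by positivity, ?_⟩
  intro r hr hrm xt hxt
  have hkey : ∀ π : Equiv.Perm (Fin n), ∀ p : Fin n × Fin n,
      |dist (x (π p.1)) (x (π p.2)) - dist (xt (π p.1)) (xt (π p.2))| ≤ 2 * r := by
    intro π p
    have := dist_dist_dist_le (x (π p.1)) (x (π p.2)) (xt (π p.1)) (xt (π p.2))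
    rw [Real.dist_eq, hxt, hxt] at this
    linarith
  have hbdd : ∀ (f : Fin n × Fin n → ℝ), BddAbove (Set.range f) :=
    fun f => Finite.bddAbove_range f
  -- the identity distortion is small
  have hid : (⨆ p : Fin n × Fin n,
      |dist (x p.1) (x p.2) - dist (xt p.1) (xt p.2)|) ≤ 2 * r :=
    ciSup_le fun p => by simpa using hkey 1 p
  have hid0 : (0 : ℝ) ≤ ⨆ p : Fin n × Fin n,
      |dist (x p.1) (x p.2) - dist (xt p.1) (xt p.2)| :=
    le_trans (abs_nonneg _)
      (le_ciSup (f := fun p : Fin n × Fin n =>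
        |dist (x p.1) (x p.2) - dist (xt p.1) (xt p.2)|) (hbdd _) ((i₁, i₂)))
  have hRHS : pertDist x xt 1 = (1 / 2) * ⨆ p : Fin n × Fin n,
      |dist (x p.1) (x p.2) - dist (xt p.1) (xt p.2)| := by
    unfold pertDist
    simp
  rw [← hRHS]
  apply le_antisymm
  · exact ciInf_le (Finite.bddBelow_range _) 1
  · apply le_ciInf
    intro π
    by_cases h : P π
    · -- π is not distance preserving: pertDist π is big
      set p := h.choose with hp
      have hps := h.choose_spec
      have hmle : m ≤ δ π := Finset.inf'_le δ (Finset.mem_univ π)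
      have hδval : δ π = |dist (x p.1) (x p.2) - dist (x (π p.1)) (x (π p.2))| := by
        rw [hδ]; exact dif_pos h
      have h1 : |dist (x (π p.1)) (x (π p.2)) - dist (xt (π p.1)) (xt (π p.2))| ≤ 2 * r :=
        hkey π p
      have h2 : δ π - 2 * r ≤
          |dist (x p.1) (x p.2) - dist (xt (π p.1)) (xt (π p.2))| := by
        rw [hδval]
        have := abs_sub_abs_le_abs_sub
          (dist (x p.1) (x p.2) - dist (x (π p.1)) (x (π p.2)))
          (dist (x p.1) (x p.2) - dist (xt (π p.1)) (xt (π p.2)))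
        have h3 := abs_sub (dist (x p.1) (x p.2) - dist (x (π p.1)) (x (π p.2)))
        -- use triangle ineq directly
        have h4 : |dist (x p.1) (x p.2) - dist (x (π p.1)) (x (π p.2))| ≤
            |dist (x p.1) (x p.2) - dist (xt (π p.1)) (xt (π p.2))| +
            |dist (x (π p.1)) (x (π p.2)) - dist (xt (π p.1)) (xt (π p.2))| := by
          have := abs_sub_le (dist (x p.1) (x p.2))
            (dist (xt (π p.1)) (xt (π p.2))) (dist (x (π p.1)) (x (π p.2)))
          calc |dist (x p.1) (x p.2) - dist (x (π p.1)) (x (π p.2))|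
              ≤ |dist (x p.1) (x p.2) - dist (xt (π p.1)) (xt (π p.2))| +
                |dist (xt (π p.1)) (xt (π p.2)) - dist (x (π p.1)) (x (π p.2))| := this
            _ = _ := by rw [abs_sub_comm (dist (xt (π p.1)) (xt (π p.2)))]
        linarith
      have h5 : δ π - 2 * r ≤ ⨆ q : Fin n × Fin n,
          |dist (x q.1) (x q.2) - dist (xt (π q.1)) (xt (π q.2))| :=
        le_trans h2 (le_ciSup (f := fun q : Fin n × Fin n =>
          |dist (x q.1) (x q.2) - dist (xt (π q.1)) (xt (π q.2))|) (hbdd _) p)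
      unfold pertDist
      simp only [Equiv.Perm.coe_one, id_eq]
      have h6 : 4 * r < m := by linarith [hrm]
      have h7 : 2 * r ≤ δ π - 2 * r := by linarith [hmle]
      linarith [hid, h5, hmle]
    · -- π is distance preserving: pertDist π = pertDist 1
      simp only [hP, not_exists, not_ne_iff] at h
      have heq : ∀ p : Fin n × Fin n,
          |dist (x p.1) (x p.2) - dist (xt (π p.1)) (xt (π p.2))| =
          |dist (x (π p.1)) (x (π p.2)) - dist (xt (π p.1)) (xt (π p.2))| := by
        intro p; rw [h p]
      have hsup : (⨆ p : Fin n × Fin n,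
          |dist (x p.1) (x p.2) - dist (xt (π p.1)) (xt (π p.2))|) =
          ⨆ p : Fin n × Fin n,
          |dist (x p.1) (x p.2) - dist (xt p.1) (xt p.2)| := by
        let e : Fin n × Fin n ≃ Fin n × Fin n := Equiv.prodCongr π π
        calc (⨆ p : Fin n × Fin n,
            |dist (x p.1) (x p.2) - dist (xt (π p.1)) (xt (π p.2))|)
            = ⨆ p : Fin n × Fin n,
              |dist (x (e p).1) (x (e p).2) - dist (xt (e p).1) (xt (e p).2)| := by
              exact iSup_congr fun p => heq p
          _ = ⨆ p : Fin n × Fin n,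
              |dist (x p.1) (x p.2) - dist (xt p.1) (xt p.2)| :=
              congrArg sSup (e.surjective.range_comp
                (fun p : Fin n × Fin n =>
                  |dist (x p.1) (x p.2) - dist (xt p.1) (xt p.2)|))
      unfold pertDist
      simp only [Equiv.Perm.coe_one, id_eq]
      rw [hsup]
end

section
/- Let X = {x_1, ..., x_n} be a point cloud in ℝ^N, let δ > 0, and let π be a permutation of Fin n such that D_π(X, X) ≥ δ/2, i.e. max over (i,j) of |dist(x_i, x_j) − dist(x_{π(i)}, x_{π(j)})| ≥ δ. Then for every r with 0 < 4r < δ and every r-perturbation X_r = {x̃_1, ..., x̃_n} of X, one has D_π(X, X_r) ≥ r. -/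
theorem stmt_3 {N n : ℕ} (x : Fin n → EuclideanSpace ℝ (Fin N))
    (δ : ℝ) (hδ : 0 < δ)
    (π : Equiv.Perm (Fin n))
    (hπ : δ ≤ ⨆ p : Fin n × Fin n,
      |dist (x p.1) (x p.2) - dist (x (π p.1)) (x (π p.2))|) :
    ∀ r : ℝ, 0 < r → 4 * r < δ →
      ∀ xt : Fin n → EuclideanSpace ℝ (Fin N),
        (∀ i, dist (x i) (xt i) = r) →
        r ≤ pertDist x xt π := by
  intro r hr hrδ xt hxt
  -- n ≠ 0
  rcases Nat.eq_zero_or_pos n with hn | hn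
  · subst hn
    have : IsEmpty (Fin 0 × Fin 0) := by infer_instance
    rw [Real.iSup_of_isEmpty] at hπ
    linarith
  have : Nonempty (Fin n × Fin n) := ⟨⟨⟨0, hn⟩, ⟨0, hn⟩⟩⟩
  set f : Fin n × Fin n → ℝ := fun p =>
    |dist (x p.1) (x p.2) - dist (x (π p.1)) (x (π p.2))| with hf
  obtain ⟨p, hp⟩ := Finite.exists_max f
  have hsup : (⨆ q, f q) ≤ f p := ciSup_le hp
  have hfp : δ ≤ f p := le_trans hπ hsup
  set g : Fin n × Fin n → ℝ := fun q =>
    |dist (x q.1) (x q.2) - dist (xt (π q.1)) (xt (π q.2))| with hg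
  have key : 2 * r ≤ g p := by
    have htri : |dist (x (π p.1)) (x (π p.2)) - dist (xt (π p.1)) (xt (π p.2))| ≤ 2 * r := by
      have := dist_dist_dist_le (x (π p.1)) (x (π p.2)) (xt (π p.1)) (xt (π p.2))
      rw [Real.dist_eq, hxt, hxt] at this
      linarith
    have h1 : f p ≤ g p + |dist (x (π p.1)) (x (π p.2)) - dist (xt (π p.1)) (xt (π p.2))| := by
      have := abs_sub_le (dist (x p.1) (x p.2)) (dist (xt (π p.1)) (xt (π p.2)))
        (dist (x (π p.1)) (x (π p.2)))
      rw [abs_sub_comm (dist (xt (π p.1)) (xt (π p.2)))] at this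
      simpa [hf, hg] using this
    linarith
  have hle : g p ≤ ⨆ q, g q := le_ciSup (Finite.bddAbove_range g) p
  unfold pertDist
  have : 2 * r ≤ ⨆ q : Fin n × Fin n,
      |dist (x q.1) (x q.2) - dist (xt (π q.1)) (xt (π q.2))| := le_trans key hle
  linarith
end

section
/- Let X = {x_1, ..., x_n} be a generic point cloud of pairwise distinct points lying in a linear subspace W of ℝ^N. Then there exists r_0 > 0 such that for every r with 0 < r < r_0 and every orthogonal r-perturbation X_r^⊥ of X (with respect to W), the discrete Gromov–Hausdorff distance satisfies the strict inequality d_J(X, X_r^⊥) < r. -/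
/-!
Every displacement `x̃ i - x i` is orthogonal to `x i - x j ∈ W`, so by Pythagoras the new
distance `d̃` of a pair and the old one `d` satisfy `d̃² = d² + ‖b‖²`, where `‖b‖ ≤ 2r` is the
difference of the two displacements. Hence `0 ≤ d̃ - d = ‖b‖² / (d̃ + d) ≤ 2r² / δ`, with `δ` the
smallest distance between distinct points. Matching the points by the identity permutation
gives `d_J ≤ r² / δ`, which is `< r` as soon as `r < δ`.
-/

lemma exists_pos_le_dist_of_injective {ι α : Type*} [Finite ι] [MetricSpace α] {x : ι → α}
    (hx : Function.Injective x) : ∃ δ > 0, ∀ i j, i ≠ j → δ ≤ dist (x i) (x j) := by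
  obtain ⟨⟨δ, hδ⟩, hle⟩ := Finite.exists_ge (α := Set.Ioi (0 : ℝ))
    fun p : {p : ι × ι // p.1 ≠ p.2} => ⟨dist (x p.1.1) (x p.1.2), dist_pos.2 (hx.ne p.2)⟩
  exact ⟨δ, hδ, fun i j hij => hle ⟨(i, j), hij⟩⟩

lemma abs_sub_le_of_sq_eq_sq_add {d d' s δ : ℝ} (hδ : 0 < δ) (hδd : δ ≤ d) (hd' : 0 ≤ d')
    (hs : 0 ≤ s) (h : d' ^ 2 = d ^ 2 + s) : |d - d'| ≤ s / (2 * δ) := by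
  have hdd' : d ≤ d' := by nlinarith
  rw [abs_sub_comm, abs_of_nonneg (sub_nonneg.2 hdd'), le_div_iff₀ (by positivity)]
  nlinarith [mul_le_mul_of_nonneg_left (by linarith : 2 * δ ≤ d' + d) (sub_nonneg.2 hdd')]

section Orthogonal

variable {E : Type*} [NormedAddCommGroup E] [InnerProductSpace ℝ E] {K : Submodule ℝ E}
  {u v u' v' : E}

lemma dist_sq_eq_dist_sq_add_of_sub_mem_orthogonal (hu : u ∈ K) (hv : v ∈ K)
    (hu' : u' - u ∈ Kᗮ) (hv' : v' - v ∈ Kᗮ) :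
    dist u' v' ^ 2 = dist u v ^ 2 + ‖(u' - u) - (v' - v)‖ ^ 2 := by
  have hinner : inner ℝ (u - v) ((u' - u) - (v' - v)) = 0 :=
    Submodule.inner_right_of_mem_orthogonal (K.sub_mem hu hv) (Kᗮ.sub_mem hu' hv')
  have hsplit : u' - v' = (u - v) + ((u' - u) - (v' - v)) := by abel
  rw [dist_eq_norm, dist_eq_norm, hsplit, sq, sq, sq]
  exact norm_add_sq_eq_norm_sq_add_norm_sq_real hinner

lemma abs_dist_sub_dist_le_of_sub_mem_orthogonal {r δ : ℝ} (hu : u ∈ K) (hv : v ∈ K)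
    (hu' : u' - u ∈ Kᗮ) (hv' : v' - v ∈ Kᗮ) (hru : dist u u' ≤ r) (hrv : dist v v' ≤ r)
    (hδ : 0 < δ) (hδuv : δ ≤ dist u v) :
    |dist u v - dist u' v'| ≤ 2 * r ^ 2 / δ := by
  have hnorm : ‖(u' - u) - (v' - v)‖ ≤ 2 * r := by
    calc ‖(u' - u) - (v' - v)‖ ≤ ‖u' - u‖ + ‖v' - v‖ := norm_sub_le _ _
      _ = dist u u' + dist v v' := by rw [dist_comm u, dist_comm v, dist_eq_norm, dist_eq_norm]
      _ ≤ 2 * r := by linarith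
  calc |dist u v - dist u' v'| ≤ ‖(u' - u) - (v' - v)‖ ^ 2 / (2 * δ) :=
        abs_sub_le_of_sq_eq_sq_add hδ hδuv dist_nonneg (by positivity)
          (dist_sq_eq_dist_sq_add_of_sub_mem_orthogonal hu hv hu' hv')
    _ ≤ (2 * r) ^ 2 / (2 * δ) := by gcongr
    _ = 2 * r ^ 2 / δ := by field_simp

end Orthogonal

lemma dJ_le_of_abs_dist_sub_dist_le {N n : ℕ} {x y : Fin n → EuclideanSpace ℝ (Fin N)} {c : ℝ}
    (hc : 0 ≤ c) (h : ∀ i j, |dist (x i) (x j) - dist (y i) (y j)| ≤ c) : dJ x y ≤ c / 2 := by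
  calc dJ x y ≤ pertDist x y 1 := ciInf_le (Finite.bddBelow_range _) 1
    _ ≤ 1 / 2 * c := by
      unfold pertDist
      gcongr
      exact Real.iSup_le (fun p => h p.1 p.2) hc
    _ = c / 2 := by ring

theorem stmt_6_general {N n : ℕ} (W : Submodule ℝ (EuclideanSpace ℝ (Fin N)))
    (x : Fin n → EuclideanSpace ℝ (Fin N))
    (hxW : ∀ i, x i ∈ W) (hinj : Function.Injective x) :
    ∃ r₀ > 0, ∀ r : ℝ, 0 < r → r < r₀ →
      ∀ xperp : Fin n → EuclideanSpace ℝ (Fin N),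
        (∀ i, dist (x i) (xperp i) = r) →
        (∀ i, xperp i - x i ∈ Wᗮ) →
        dJ x xperp < r := by
  obtain ⟨δ, hδ, hsep⟩ := exists_pos_le_dist_of_injective hinj
  refine ⟨δ, hδ, fun r hr hrδ xperp hdist hperp => ?_⟩
  have hdistortion : ∀ i j, |dist (x i) (x j) - dist (xperp i) (xperp j)| ≤ 2 * r ^ 2 / δ := by
    intro i j
    rcases eq_or_ne i j with rfl | hij
    · simp only [dist_self, sub_self, abs_zero]
      positivity
    · exact abs_dist_sub_dist_le_of_sub_mem_orthogonal (hxW i) (hxW j) (hperp i) (hperp j)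
        (hdist i).le (hdist j).le hδ (hsep i j hij)
  calc dJ x xperp ≤ 2 * r ^ 2 / δ / 2 := dJ_le_of_abs_dist_sub_dist_le (by positivity) hdistortion
    _ = r * (r / δ) := by ring
    _ < r * 1 := mul_lt_mul_of_pos_left ((div_lt_one hδ).2 hrδ) hr
    _ = r := mul_one r

theorem stmt_6 {N n : ℕ} (W : Submodule ℝ (EuclideanSpace ℝ (Fin N)))
    (x : Fin n → EuclideanSpace ℝ (Fin N))
    (hxW : ∀ i, x i ∈ W) (hinj : Function.Injective x)
    (hgen : Generic x) :
    ∃ r₀ > 0, ∀ r : ℝ, 0 < r → r < r₀ →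
      ∀ xperp : Fin n → EuclideanSpace ℝ (Fin N),
        (∀ i, dist (x i) (xperp i) = r) →
        (∀ i, xperp i - x i ∈ Wᗮ) →
        dJ x xperp < r :=
  stmt_6_general W x hxW hinj
end
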